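/- arXiv:math/0302105 — 3 statements merged into one kernel-verified Lean document; each statement's English description precedes it below -/
import Mathlib

section
/- Gessel–Viennot for 2×2 on the grid: for departure points D₁, D₂ and arrival points A₁, A₂ in ℤ² with A_j - D_i having nonnegative coordinates for all i,j, the number of pairs of vertex-disjoint east/north lattice paths (path i from D_i to A_i) equals det(λ_{ij}) where λ_{ij} = C((A_j-D_i)_x + (A_j-D_i)_y, (A_j-D_i)_x), provided the compatibility condition holds: any non-intersecting pair connecting D₁→A_{σ(1)}, D₂→A_{σ(2)} forces σ = id. -/
/-- An east/north lattice path from `D` to `A`: steps `(+1,0)` or `(0,+1)`. -/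
def IsENPath (p : List (ℤ × ℤ)) (D A : ℤ × ℤ) : Prop :=
  p.head? = some D ∧ p.getLast? = some A ∧
  p.Chain' (fun u v => v = (u.1 + 1, u.2) ∨ v = (u.1, u.2 + 1))

/-- The number of east/north paths from `D` to `A` (as given by the binomial coefficient). -/
def gvCoef (D A : ℤ × ℤ) : ℕ :=
  Nat.choose ((A.1 - D.1) + (A.2 - D.2)).toNat (A.1 - D.1).toNat

abbrev GVStep (u v : ℤ × ℤ) : Prop := v = (u.1 + 1, u.2) ∨ v = (u.1, u.2 + 1)

def stepFn (u : ℤ × ℤ) (b : Bool) : ℤ × ℤ := if b then (u.1, u.2 + 1) else (u.1 + 1, u.2)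

def fromSteps (D : ℤ × ℤ) (l : List Bool) : List (ℤ × ℤ) := l.scanl stepFn D

lemma fromSteps_nil (D : ℤ × ℤ) : fromSteps D [] = [D] := rfl

lemma fromSteps_cons (D : ℤ × ℤ) (b : Bool) (l : List Bool) :
    fromSteps D (b :: l) = D :: fromSteps (stepFn D b) l := List.scanl_cons

lemma fromSteps_ne_nil (D : ℤ × ℤ) (l : List Bool) : fromSteps D l ≠ [] := by
  cases l <;> simp [fromSteps_nil, fromSteps_cons]

lemma fromSteps_head? (D : ℤ × ℤ) (l : List Bool) : (fromSteps D l).head? = some D := by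
  cases l <;> simp [fromSteps_nil, fromSteps_cons]

lemma getLast?_cons_ne {α : Type*} (a : α) {l : List α} (h : l ≠ []) :
    (a :: l).getLast? = l.getLast? := by
  cases l with
  | nil => exact absurd rfl h
  | cons b t => exact List.getLast?_cons_cons

lemma fromSteps_getLast? (D : ℤ × ℤ) (l : List Bool) :
    (fromSteps D l).getLast? = some (D.1 + l.count false, D.2 + l.count true) := by
  induction l generalizing D with
  | nil => simp [fromSteps_nil]
  | cons b l ih =>
      rw [fromSteps_cons, getLast?_cons_ne _ (fromSteps_ne_nil _ _), ih]
      cases b <;> simp [stepFn, List.count_cons, Prod.ext_iff] <;> push_cast <;> ring_nf <;> omega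

lemma fromSteps_chain' (D : ℤ × ℤ) (l : List Bool) :
    (fromSteps D l).Chain' GVStep := by
  induction l generalizing D with
  | nil => exact List.isChain_singleton _
  | cons b l ih =>
      rw [fromSteps_cons]
      refine List.isChain_cons.mpr ⟨?_, ih _⟩
      intro y hy
      rw [fromSteps_head? _ l] at hy
      cases hy
      cases b
      · exact Or.inl rfl
      · exact Or.inr rfl

lemma stepFn_inj (D : ℤ × ℤ) {b b' : Bool} (h : stepFn D b = stepFn D b') : b = b' := by
  cases b <;> cases b' <;> simp_all [stepFn, Prod.ext_iff] <;> omega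

lemma fromSteps_inj (D : ℤ × ℤ) : ∀ {l l' : List Bool},
    fromSteps D l = fromSteps D l' → l = l' := by
  intro l
  induction l generalizing D with
  | nil => intro l' h; cases l' with
      | nil => rfl
      | cons b t => simp [fromSteps_nil, fromSteps_cons] at h
                    exact absurd h (fromSteps_ne_nil _ _)
  | cons b t ih =>
      intro l' h
      cases l' with
      | nil => simp [fromSteps_nil, fromSteps_cons] at h
               exact absurd h (fromSteps_ne_nil _ _)
      | cons b' t' =>
          rw [fromSteps_cons, fromSteps_cons] at h
          replace h : fromSteps (stepFn D b) t = fromSteps (stepFn D b') t' :=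
            (List.cons.injEq _ _ _ _ ▸ h).2
          have hb : b = b' := by
            have h1 := congrArg List.head? h
            rw [fromSteps_head?, fromSteps_head?] at h1
            exact stepFn_inj D (by simpa using h1)
          subst hb
          exact congrArg (b :: ·) (ih _ h)

lemma exists_steps : ∀ (p : List (ℤ × ℤ)) (D A : ℤ × ℤ), IsENPath p D A →
    ∃ l : List Bool, p = fromSteps D l := by
  intro p
  induction p with
  | nil => intro D A h; simp [IsENPath] at h
  | cons x t ih =>
      intro D A h
      obtain ⟨h1, h2, h3⟩ := h
      simp only [List.head?_cons, Option.some.injEq] at h1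
      subst h1
      cases t with
      | nil => exact ⟨[], rfl⟩
      | cons y t' =>
          have hstep : GVStep x y := (List.isChain_cons_cons.mp h3).1
          have hpath : IsENPath (y :: t') y A := by
            refine ⟨rfl, ?_, (List.isChain_cons_cons.mp h3).2⟩
            rw [← h2, List.getLast?_cons_cons]
          obtain ⟨l, hl⟩ := ih y A hpath
          cases hstep with
          | inl he => exact ⟨false :: l, by rw [fromSteps_cons]; simp [stepFn, ← he, hl]⟩
          | inr hn => exact ⟨true :: l, by rw [fromSteps_cons]; simp [stepFn, ← hn, hl]⟩

def BL (n k : ℕ) : Type := {l : List Bool // l.length = n ∧ l.count true = k}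

instance listlen_finite (n : ℕ) : Finite {l : List Bool // l.length = n} :=
  Finite.of_equiv _ (Equiv.vectorEquivFin Bool n).symm

instance BL_finite' (n : ℕ) (P : List Bool → Prop) :
    Finite {l : List Bool // l.length = n ∧ P l} :=
  Finite.of_injective (fun x => (⟨x.1, x.2.1⟩ : {l : List Bool // l.length = n}))
    (fun a b h => Subtype.ext (Subtype.mk_eq_mk.mp h))

instance BL_finite (n k : ℕ) : Finite (BL n k) := BL_finite' n _

def blEquiv (n k : ℕ) : BL n k ⊕ {l : List Bool // l.length = n ∧ l.count true + 1 = k} ≃ BL (n+1) k where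
  toFun x := match x with
    | Sum.inl ⟨l, h⟩ => ⟨false :: l, by simp [h.1, h.2]⟩
    | Sum.inr ⟨l, h⟩ => ⟨true :: l, by simp [h.1, List.count_cons, h.2]⟩
  invFun x := match hx : x.1 with
    | [] => absurd (hx ▸ x.2.1) (by simp)
    | false :: t => Sum.inl ⟨t, by have := x.2; rw [hx] at this; simpa using this⟩
    | true :: t => Sum.inr ⟨t, by have := x.2; rw [hx] at this
                                  simpa [List.count_cons] using this⟩
  left_inv x := by
    rcases x with ⟨l, h⟩ | ⟨l, h⟩ <;> rfl
  right_inv x := by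
    obtain ⟨l, h⟩ := x
    cases l with
    | nil => simp at h
    | cons b t => cases b <;> rfl

lemma card_BL : ∀ n k, Nat.card (BL n k) = n.choose k := by
  intro n
  induction n with
  | zero =>
      intro k
      cases k with
      | zero =>
          have : Unique (BL 0 0) :=
            ⟨⟨⟨[], by simp⟩⟩, by rintro ⟨l, h⟩; cases l with
              | nil => rfl
              | cons b t => simp at h⟩
          simp [Nat.card_unique]
      | succ k =>
          have : IsEmpty (BL 0 (k+1)) := ⟨by rintro ⟨l, h⟩; cases l with
            | nil => simp at h
            | cons b t => simp at h⟩
          simp [Nat.card_of_isEmpty]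
  | succ n ih =>
      intro k
      have h1 : Nat.card (BL (n+1) k) =
          Nat.card (BL n k) + Nat.card {l : List Bool // l.length = n ∧ l.count true + 1 = k} := by
        rw [← Nat.card_congr (blEquiv n k), Nat.card_sum]
      cases k with
      | zero =>
          have : IsEmpty {l : List Bool // l.length = n ∧ l.count true + 1 = 0} :=
            ⟨by rintro ⟨l, h⟩; omega⟩
          rw [h1, ih 0,
            Nat.card_of_isEmpty (α := {l : List Bool // l.length = n ∧ l.count true + 1 = 0})]
          simp
      | succ k =>
          have h2 : Nat.card {l : List Bool // l.length = n ∧ l.count true + 1 = k + 1} =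
              Nat.card (BL n k) :=
            Nat.card_congr (Equiv.subtypeEquivRight (fun l => by constructor <;> rintro ⟨h, h'⟩ <;>
              exact ⟨h, by omega⟩))
          rw [h1, h2, ih, ih, Nat.choose_succ_succ, Nat.add_comm]

lemma count_add_count (l : List Bool) : l.count true + l.count false = l.length := by
  induction l with
  | nil => simp
  | cons b t ih => cases b <;> simp [List.count_cons] <;> omega

lemma paths_bij (Dp Ap : ℤ × ℤ) (hx : Dp.1 ≤ Ap.1) (hy : Dp.2 ≤ Ap.2) :
    ∃ f : BL ((Ap.1 - Dp.1) + (Ap.2 - Dp.2)).toNat (Ap.2 - Dp.2).toNat →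
      {p : List (ℤ × ℤ) // IsENPath p Dp Ap}, Function.Bijective f := by
  set n : ℕ := ((Ap.1 - Dp.1) + (Ap.2 - Dp.2)).toNat with hn
  set k : ℕ := (Ap.2 - Dp.2).toNat with hk
  have hkx : (Ap.1 - Dp.1).toNat + k = n := by omega
  have hmem : ∀ x : BL n k, IsENPath (fromSteps Dp x.1) Dp Ap := by
    rintro ⟨l, hlen, hcnt⟩
    refine ⟨fromSteps_head? _ _, ?_, fromSteps_chain' _ _⟩
    rw [fromSteps_getLast? _ l]
    have hc := count_add_count l
    have hA : (Dp.1 + (l.count false : ℤ), Dp.2 + (l.count true : ℤ)) = Ap := by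
      have h1 : Ap.1 = Dp.1 + (Ap.1 - Dp.1) := by ring
      have h2 : Ap.2 = Dp.2 + (Ap.2 - Dp.2) := by ring
      rw [Prod.ext_iff]
      constructor <;> simp <;> omega
    rw [hA]
  have hbij : Function.Bijective (fun x : BL n k =>
      (⟨fromSteps Dp x.1, hmem x⟩ : {p : List (ℤ × ℤ) // IsENPath p Dp Ap})) := by
    constructor
    · intro a b h
      exact Subtype.ext (fromSteps_inj Dp (congrArg Subtype.val h))
    · rintro ⟨p, hp⟩
      obtain ⟨l, rfl⟩ := exists_steps p Dp Ap hp
      have hL := hp.2.1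
      rw [fromSteps_getLast? _ l] at hL
      have hL' := Option.some.inj hL
      have hL1 : Dp.1 + (l.count false : ℤ) = Ap.1 := congrArg Prod.fst hL'
      have hL2 : Dp.2 + (l.count true : ℤ) = Ap.2 := congrArg Prod.snd hL'
      have hct : l.count true = k := by omega
      have hc := count_add_count l
      exact ⟨⟨l, by omega, hct⟩, Subtype.ext rfl⟩
  exact ⟨_, hbij⟩

lemma paths_finite (Dp Ap : ℤ × ℤ) (hx : Dp.1 ≤ Ap.1) (hy : Dp.2 ≤ Ap.2) :
    Finite {p : List (ℤ × ℤ) // IsENPath p Dp Ap} := by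
  obtain ⟨f, hf⟩ := paths_bij Dp Ap hx hy
  exact Finite.of_surjective f hf.2

lemma card_paths (Dp Ap : ℤ × ℤ) (hx : Dp.1 ≤ Ap.1) (hy : Dp.2 ≤ Ap.2) :
    Nat.card {p : List (ℤ × ℤ) // IsENPath p Dp Ap} = gvCoef Dp Ap := by
  obtain ⟨f, hf⟩ := paths_bij Dp Ap hx hy
  rw [← Nat.card_congr (Equiv.ofBijective f hf), card_BL]
  unfold gvCoef
  have h3 : (Ap.1 - Dp.1).toNat =
      ((Ap.1 - Dp.1) + (Ap.2 - Dp.2)).toNat - (Ap.2 - Dp.2).toNat := by omega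
  rw [h3, Nat.choose_symm (by omega)]

/-! ### Nodup of paths -/

lemma path_nodup {p : List (ℤ × ℤ)} (h : p.Chain' GVStep) : p.Nodup := by
  have hS : p.Chain' (fun u v : ℤ × ℤ => u.1 + u.2 < v.1 + v.2) := by
    refine h.imp ?_
    rintro u v (rfl | rfl) <;> simp <;> omega
  haveI : IsTrans (ℤ × ℤ) (fun u v : ℤ × ℤ => u.1 + u.2 < v.1 + v.2) :=
    ⟨fun _ _ _ h1 h2 => h1.trans h2⟩
  have hP := List.isChain_iff_pairwise.mp hS
  exact hP.imp (fun {a b} hab => by rintro rfl; omega)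

/-! ### head?/getLast? helpers -/

lemma head?_append_cons {α : Type*} (t : List α) (v : α) (x y : List α) :
    (t ++ v :: x).head? = (t ++ v :: y).head? := by cases t <;> simp

lemma getLast?_append_cons {α : Type*} : ∀ (x : List α) (v : α) (z : List α),
    (x ++ v :: z).getLast? = (v :: z).getLast?
  | [], v, z => rfl
  | a :: x, v, z => by
      rw [List.cons_append, getLast?_cons_ne _ (by simp), getLast?_append_cons x v z]

/-! ### The tail-swapping map -/

def swapPair (pq : List (ℤ × ℤ) × List (ℤ × ℤ)) : List (ℤ × ℤ) × List (ℤ × ℤ) :=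
  match (pq.1.dropWhile (fun v => !decide (v ∈ pq.2))).head? with
  | none => pq
  | some v =>
      (pq.1.takeWhile (fun v => !decide (v ∈ pq.2)) ++
         v :: (pq.2.dropWhile (fun w => !decide (w = v))).tail,
       pq.2.takeWhile (fun w => !decide (w = v)) ++
         v :: (pq.1.dropWhile (fun v => !decide (v ∈ pq.2))).tail)

lemma swap_spec {p q : List (ℤ × ℤ)} {Dp Ap Dq Aq : ℤ × ℤ}
    (hp : IsENPath p Dp Ap) (hq : IsENPath q Dq Aq) (hc : ∃ v, v ∈ p ∧ v ∈ q) :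
    IsENPath (swapPair (p, q)).1 Dp Aq ∧ IsENPath (swapPair (p, q)).2 Dq Ap ∧
      (∃ v, v ∈ (swapPair (p, q)).1 ∧ v ∈ (swapPair (p, q)).2) ∧
      swapPair (swapPair (p, q)) = (p, q) := by
  classical
  obtain ⟨hph, hpl, hpc⟩ := hp
  obtain ⟨hqh, hql, hqc⟩ := hq
  set P1 : ℤ × ℤ → Bool := fun v => !decide (v ∈ q) with hP1
  set t := p.takeWhile P1 with hdeft
  set r := p.dropWhile P1 with hdefr
  have hr_ne : r ≠ [] := by
    rw [hdefr]
    intro h0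
    rw [List.dropWhile_eq_nil_iff] at h0
    obtain ⟨v, hv1, hv2⟩ := hc
    have := h0 v hv1
    simp [hP1] at this
    exact this hv2
  set v := r.head hr_ne with hdefv
  have hrh : r.head? = some v := List.head?_eq_head hr_ne
  have hv_q : v ∈ q := by
    have hv0 : P1 v = false := List.head_dropWhile_not P1 hr_ne
    simpa [hP1] using hv0
  have hr_cons : r = v :: r.tail := (List.cons_head_tail hr_ne).symm
  set p₂ := r.tail with hdefp₂
  have hpt : p = t ++ v :: p₂ := by
    rw [← hr_cons, hdeft, hdefr, List.takeWhile_append_dropWhile]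
  have ht : ∀ w ∈ t, w ∉ q := by
    intro w hw
    have := List.mem_takeWhile_imp hw
    simpa [hP1] using this
  -- decomposition of q at v
  set P2 : ℤ × ℤ → Bool := fun w => !decide (w = v) with hP2
  set u := q.takeWhile P2 with hdefu
  set s := q.dropWhile P2 with hdefs
  have hs_ne : s ≠ [] := by
    rw [hdefs]
    intro h0
    rw [List.dropWhile_eq_nil_iff] at h0
    have := h0 v hv_q
    simp [hP2] at this
  have hs_head : s.head hs_ne = v := by
    have hv0 : P2 (s.head hs_ne) = false := List.head_dropWhile_not P2 hs_ne
    simpa [hP2] using hv0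
  have hs_cons : s = v :: s.tail := by
    conv_lhs => rw [← List.cons_head_tail hs_ne, hs_head]
  set q₂ := s.tail with hdefq₂
  have hqs : q = u ++ v :: q₂ := by
    rw [← hs_cons, hdefu, hdefs, List.takeWhile_append_dropWhile]
  have hu : ∀ w ∈ u, w ≠ v := by
    intro w hw
    have := List.mem_takeWhile_imp hw
    simpa [hP2] using this
  -- the swap
  have hsw : swapPair (p, q) = (t ++ v :: q₂, u ++ v :: p₂) := by
    show (match (p.dropWhile (fun v => !decide (v ∈ q))).head? with
      | none => (p, q)
      | some v => _) = _
    rw [← hP1, ← hdefr, hrh]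
  -- chain decompositions
  have hpc' := List.isChain_append.mp (hpt ▸ hpc)
  have hqc' := List.isChain_append.mp (hqs ▸ hqc)
  have hp' : IsENPath (t ++ v :: q₂) Dp Aq := by
    refine ⟨?_, ?_, ?_⟩
    · rw [head?_append_cons t v q₂ p₂, ← hpt]; exact hph
    · rw [getLast?_append_cons, ← getLast?_append_cons u, ← hqs]; exact hql
    · refine List.isChain_append.mpr ⟨hpc'.1, hqc'.2.1, ?_⟩
      intro x hx y hy
      exact hpc'.2.2 x hx y (by simpa using hy)
  have hq' : IsENPath (u ++ v :: p₂) Dq Ap := by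
    refine ⟨?_, ?_, ?_⟩
    · rw [head?_append_cons u v p₂ q₂, ← hqs]; exact hqh
    · rw [getLast?_append_cons, ← getLast?_append_cons t, ← hpt]; exact hpl
    · refine List.isChain_append.mpr ⟨hqc'.1, hpc'.2.1, ?_⟩
      intro x hx y hy
      exact hqc'.2.2 x hx y (by simpa using hy)
  -- nodup facts
  have hnodp : p.Nodup := path_nodup hpc
  have htp₂ : ∀ w ∈ t, w ∉ v :: p₂ := by
    have := List.nodup_append.mp (hpt ▸ hnodp)
    exact fun w hw h => this.2.2 w hw w h rfl
  -- swapping back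
  have ht' : ∀ w ∈ t, w ∉ u ++ v :: p₂ := by
    intro w hw hmem
    rcases List.mem_append.mp hmem with h1 | h1
    · exact ht w hw ((List.takeWhile_sublist _).mem h1)
    · exact htp₂ w hw h1
  refine ⟨hsw ▸ hp', hsw ▸ hq', ?_, ?_⟩
  · exact hsw ▸ ⟨v, by simp, by simp⟩
  · rw [hsw]
    have e1 : ((t ++ v :: q₂).dropWhile
        (fun w => !decide (w ∈ u ++ v :: p₂))).head? = some v := by
      rw [List.dropWhile_append_of_pos (by
        intro a ha
        simpa using ht' a ha)]
      rw [List.dropWhile_cons_of_neg (by simp)]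
      rfl
    show (match ((t ++ v :: q₂).dropWhile
        (fun w => !decide (w ∈ u ++ v :: p₂))).head? with
      | none => _ | some v => _) = (p, q)
    rw [e1]
    have f1 : (t ++ v :: q₂).takeWhile (fun w => !decide (w ∈ u ++ v :: p₂)) = t := by
      rw [List.takeWhile_append_of_pos (by intro a ha; simpa using ht' a ha),
          List.takeWhile_cons_of_neg (by simp), List.append_nil]
    have f2 : ((u ++ v :: p₂).dropWhile (fun w => !decide (w = v))).tail = p₂ := by
      rw [List.dropWhile_append_of_pos (by intro a ha; simpa using hu a ha),
          List.dropWhile_cons_of_neg (by simp), List.tail_cons]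
    have f3 : (u ++ v :: p₂).takeWhile (fun w => !decide (w = v)) = u := by
      rw [List.takeWhile_append_of_pos (by intro a ha; simpa using hu a ha),
          List.takeWhile_cons_of_neg (by simp), List.append_nil]
    have f4 : ((t ++ v :: q₂).dropWhile (fun w => !decide (w ∈ u ++ v :: p₂))).tail = q₂ := by
      rw [List.dropWhile_append_of_pos (by intro a ha; simpa using ht' a ha),
          List.dropWhile_cons_of_neg (by simp), List.tail_cons]
    simp only [f1, f2, f3, f4]
    rw [Prod.mk.injEq]
    exact ⟨hpt.symm, hqs.symm⟩

lemma ncard_prod_set {α β : Type*} (P : α → Prop) (Q : β → Prop) :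
    Nat.card ({pq : α × β | P pq.1 ∧ Q pq.2} : Set (α × β)) =
      Nat.card {a // P a} * Nat.card {b // Q b} :=
  (Nat.card_congr (Equiv.subtypeProdEquivProd (p := P) (q := Q))).trans (Nat.card_prod _ _)

/-- Gessel–Viennot for `n = 2` on the square grid: under the compatibility hypothesis,
the number of pairs of vertex-disjoint east/north paths (path `i` from `D i` to `A i`)
equals the determinant `λ₁₁λ₂₂ - λ₁₂λ₂₁` with `λ_{ij} = C((A_j-D_i)_x+(A_j-D_i)_y, (A_j-D_i)_x)`. -/
theorem gessel_viennot_two (D A : Fin 2 → ℤ × ℤ)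
    (hnn : ∀ i j, (D i).1 ≤ (A j).1 ∧ (D i).2 ≤ (A j).2)
    (compat : ∀ σ : Equiv.Perm (Fin 2), ∀ p q : List (ℤ × ℤ),
      IsENPath p (D 0) (A (σ 0)) → IsENPath q (D 1) (A (σ 1)) →
      (∀ v : ℤ × ℤ, ¬(v ∈ p ∧ v ∈ q)) → σ = 1) :
    (Set.ncard {pq : List (ℤ × ℤ) × List (ℤ × ℤ) |
        IsENPath pq.1 (D 0) (A 0) ∧ IsENPath pq.2 (D 1) (A 1) ∧
        ∀ v : ℤ × ℤ, ¬(v ∈ pq.1 ∧ v ∈ pq.2)} : ℤ) =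
      (gvCoef (D 0) (A 0) : ℤ) * (gvCoef (D 1) (A 1) : ℤ) -
        (gvCoef (D 0) (A 1) : ℤ) * (gvCoef (D 1) (A 0) : ℤ) := by
  classical
  haveI F00 := paths_finite (D 0) (A 0) (hnn 0 0).1 (hnn 0 0).2
  haveI F01 := paths_finite (D 0) (A 1) (hnn 0 1).1 (hnn 0 1).2
  haveI F10 := paths_finite (D 1) (A 0) (hnn 1 0).1 (hnn 1 0).2
  haveI F11 := paths_finite (D 1) (A 1) (hnn 1 1).1 (hnn 1 1).2
  set S : Set (List (ℤ × ℤ) × List (ℤ × ℤ)) := {pq |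
      IsENPath pq.1 (D 0) (A 0) ∧ IsENPath pq.2 (D 1) (A 1) ∧
      ∀ v : ℤ × ℤ, ¬(v ∈ pq.1 ∧ v ∈ pq.2)} with hS
  set T : Set (List (ℤ × ℤ) × List (ℤ × ℤ)) := {pq |
      IsENPath pq.1 (D 0) (A 0) ∧ IsENPath pq.2 (D 1) (A 1) ∧
      ∃ v : ℤ × ℤ, v ∈ pq.1 ∧ v ∈ pq.2} with hT
  set All : Set (List (ℤ × ℤ) × List (ℤ × ℤ)) := {pq |
      IsENPath pq.1 (D 0) (A 0) ∧ IsENPath pq.2 (D 1) (A 1)} with hAll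
  set U : Set (List (ℤ × ℤ) × List (ℤ × ℤ)) := {pq |
      IsENPath pq.1 (D 0) (A 1) ∧ IsENPath pq.2 (D 1) (A 0)} with hU
  -- cardinalities of the unrestricted pair sets
  have cAll : Nat.card All = gvCoef (D 0) (A 0) * gvCoef (D 1) (A 1) := by
    rw [hAll]
    exact (ncard_prod_set (fun p => IsENPath p (D 0) (A 0)) (fun q => IsENPath q (D 1) (A 1))).trans (by
      rw [card_paths _ _ (hnn 0 0).1 (hnn 0 0).2, card_paths _ _ (hnn 1 1).1 (hnn 1 1).2])
  have cU : Nat.card U = gvCoef (D 0) (A 1) * gvCoef (D 1) (A 0) := by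
    rw [hU]
    exact (ncard_prod_set (fun p => IsENPath p (D 0) (A 1)) (fun q => IsENPath q (D 1) (A 0))).trans (by
      rw [card_paths _ _ (hnn 0 1).1 (hnn 0 1).2, card_paths _ _ (hnn 1 0).1 (hnn 1 0).2])
  -- finiteness
  have hsub : Finite {pq : List (ℤ × ℤ) × List (ℤ × ℤ) //
      IsENPath pq.1 (D 0) (A 0) ∧ IsENPath pq.2 (D 1) (A 1)} :=
    Finite.of_equiv _ ((Equiv.subtypeProdEquivProd (p := fun p => IsENPath p (D 0) (A 0)) (q := fun q => IsENPath q (D 1) (A 1))).symm)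
  have hAllfin : All.Finite := by
    rw [hAll, ← Set.finite_coe_iff]
    exact hsub
  have hSfin : S.Finite := hAllfin.subset (fun pq h => ⟨h.1, h.2.1⟩)
  have hTfin : T.Finite := hAllfin.subset (fun pq h => ⟨h.1, h.2.1⟩)
  -- S and T partition All
  have hdisj : Disjoint S T := by
    rw [Set.disjoint_left]
    rintro pq ⟨_, _, hd⟩ ⟨_, _, v, hv⟩
    exact hd v hv
  have hunion : S ∪ T = All := by
    ext pq
    simp only [hS, hT, hAll, Set.mem_union, Set.mem_setOf_eq]
    constructor
    · rintro (⟨h1, h2, _⟩ | ⟨h1, h2, _⟩) <;> exact ⟨h1, h2⟩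
    · rintro ⟨h1, h2⟩
      by_cases h : ∃ v : ℤ × ℤ, v ∈ pq.1 ∧ v ∈ pq.2
      · exact Or.inr ⟨h1, h2, h⟩
      · exact Or.inl ⟨h1, h2, fun v hv => h ⟨v, hv⟩⟩
  have hcard : S.ncard + T.ncard = Nat.card All := by
    rw [← Set.ncard_union_eq hdisj hSfin hTfin, hunion, Nat.card_coe_set_eq]
  -- the swap bijection T ≃ U (every pair in U intersects, by compat)
  have hUint : ∀ pq ∈ U, ∃ v : ℤ × ℤ, v ∈ pq.1 ∧ v ∈ pq.2 := by
    rintro ⟨p, q⟩ ⟨h1, h2⟩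
    by_contra h
    push_neg at h
    have := compat (Equiv.swap 0 1) p q (by simpa using h1) (by simpa using h2)
      (fun v hv => h v hv.1 hv.2)
    exact absurd this (by decide)
  have cT : Nat.card T = Nat.card U := by
    refine Nat.card_congr ?_
    refine ⟨fun x => ⟨swapPair x.1, ?_⟩, fun y => ⟨swapPair y.1, ?_⟩, ?_, ?_⟩
    · obtain ⟨h1, h2, h3⟩ := x.2
      obtain ⟨g1, g2, _, _⟩ := swap_spec h1 h2 h3
      exact ⟨g1, g2⟩
    · obtain ⟨h1, h2⟩ := y.2
      obtain ⟨g1, g2, g3, _⟩ := swap_spec h1 h2 (hUint y.1 y.2)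
      exact ⟨g1, g2, g3⟩
    · rintro ⟨⟨p, q⟩, h1, h2, h3⟩
      obtain ⟨_, _, _, hinv⟩ := swap_spec h1 h2 h3
      exact Subtype.ext hinv
    · rintro ⟨⟨p, q⟩, h1, h2⟩
      obtain ⟨_, _, _, hinv⟩ := swap_spec h1 h2 (hUint (p, q) ⟨h1, h2⟩)
      exact Subtype.ext hinv
  have hTn : T.ncard = gvCoef (D 0) (A 1) * gvCoef (D 1) (A 0) := by
    rw [← Nat.card_coe_set_eq, cT, cU]
  rw [cAll, hTn] at hcard
  push_cast [← hcard]
  push_cast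
  linarith [hcard]
end

section
/- Involution step of Gessel–Viennot for n=2: the number of pairs of vertex-disjoint east/north lattice paths from D₁ to A₁ and from D₂ to A₂ equals λ_{11}λ_{22} − λ_{12}λ_{21} + N_{int}(id) − N_{int}(swap), where N_{int}(σ) is the number of intersecting pairs of paths D_i → A_{σ(i)}; and under the compatibility hypothesis N_{int}(id) = N_{int}(swap) and all pairs D_i → A_{swap(i)} intersect. -/
/-- `nInt D A σ` is the number of *intersecting* pairs of east/north paths, the `i`-th
path going from `D i` to `A (σ i)`. -/
noncomputable def nInt (D A : Fin 2 → ℤ × ℤ) (σ : Equiv.Perm (Fin 2)) : ℕ :=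
  Set.ncard {pq : List (ℤ × ℤ) × List (ℤ × ℤ) |
    IsENPath pq.1 (D 0) (A (σ 0)) ∧ IsENPath pq.2 (D 1) (A (σ 1)) ∧
    ∃ v : ℤ × ℤ, v ∈ pq.1 ∧ v ∈ pq.2}


/-!
Split the pairs `D₁ → A₁, D₂ → A₂` into disjoint and intersecting ones; there are
`λ₁₁λ₂₂` pairs in all. Swapping the tails of two intersecting paths after the first vertex of
the first path that lies on the second one is an involution exchanging the intersecting pairs
for the targets `(A₁, A₂)` and `(A₂, A₁)`: the swapped pair has the same first common vertex,
because a lattice path visits no vertex twice. Hence `N_int(id) = N_int(swap)`, and under the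
compatibility hypothesis every one of the `λ₁₂λ₂₁` pairs `D₁ → A₂, D₂ → A₁` intersects, so
`N_int(swap) = λ₁₂λ₂₁`.
-/

namespace List

variable {α : Type*}

lemma takeWhile_ne_append_cons [DecidableEq α] {l₁ l₂ : List α} {v : α} (h : v ∉ l₁) :
    (l₁ ++ v :: l₂).takeWhile (· ≠ v) = l₁ := by
  rw [takeWhile_append_of_pos (by grind)]
  simp

lemma dropWhile_ne_append_cons [DecidableEq α] {l₁ l₂ : List α} {v : α} (h : v ∉ l₁) :
    (l₁ ++ v :: l₂).dropWhile (· ≠ v) = v :: l₂ := by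
  rw [dropWhile_append_of_pos (by grind)]
  simp

lemma exists_split_at_first_common {p q : List α} (h : ∃ v ∈ p, v ∈ q) :
    ∃ p₁ v p₂ q₁ q₂, p = p₁ ++ v :: p₂ ∧ q = q₁ ++ v :: q₂ ∧ (∀ u ∈ p₁, u ∉ q) ∧ v ∉ q₁ := by
  classical
  obtain ⟨v, hvp, hvq⟩ := h
  obtain ⟨w, hw⟩ : ∃ w, p.find? (· ∈ q) = some w :=
    Option.isSome_iff_exists.1 (find?_isSome.2 ⟨v, hvp, by simpa using hvq⟩)
  obtain ⟨hwq, p₁, p₂, rfl, hp₁⟩ := find?_eq_some_iff_append.1 hw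
  obtain ⟨w', hw'⟩ : ∃ w', q.find? (· == w) = some w' :=
    Option.isSome_iff_exists.1 (find?_isSome.2 ⟨w, by simpa using hwq, by simp⟩)
  obtain ⟨hw'w, q₁, q₂, rfl, hq₁⟩ := find?_eq_some_iff_append.1 hw'
  obtain rfl : w' = w := by simpa using hw'w
  exact ⟨p₁, w', p₂, q₁, q₂, rfl, rfl, by simpa using hp₁, fun h => by simpa using hq₁ _ h⟩

end List

def IsENStep (u v : ℤ × ℤ) : Prop := v = (u.1 + 1, u.2) ∨ v = (u.1, u.2 + 1)

section ENPath

open List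

variable {p : List (ℤ × ℤ)} {u v D A : ℤ × ℤ}

lemma isENPath_iff :
    IsENPath p D A ↔ p.head? = some D ∧ p.getLast? = some A ∧ p.IsChain IsENStep :=
  Iff.rfl

@[simp]
lemma not_isENPath_nil : ¬IsENPath [] D A := by
  simp [isENPath_iff]

lemma isENPath_singleton : IsENPath [u] D A ↔ u = D ∧ u = A := by
  simp [isENPath_iff]

lemma isENPath_cons_cons {t : List (ℤ × ℤ)} :
    IsENPath (u :: v :: t) D A ↔ u = D ∧ IsENStep u v ∧ IsENPath (v :: t) v A := by
  simp only [isENPath_iff, isChain_cons_cons, head?_cons, getLast?_cons_cons, Option.some.injEq,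
    true_and]
  tauto

lemma IsENPath.head_eq {t : List (ℤ × ℤ)} (h : IsENPath (v :: t) D A) : v = D := by
  simpa using h.1

lemma IsENPath.pairwise_lt (h : IsENPath p D A) : p.Pairwise (· < ·) := by
  refine ((isENPath_iff.1 h).2.2.imp ?_).pairwise
  rintro u v (rfl | rfl) <;> simp [Prod.lt_iff]

lemma IsENPath.nodup (h : IsENPath p D A) : p.Nodup :=
  h.pairwise_lt.imp ne_of_lt

lemma IsENPath.le (h : IsENPath p D A) : D ≤ A := by
  obtain ⟨t, rfl⟩ : ∃ t, p = D :: t := by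
    cases p <;> simp_all [isENPath_iff]
  rcases mem_cons.1 (mem_of_getLast? h.2.1) with rfl | hA
  · exact le_rfl
  · exact (rel_of_pairwise_cons h.pairwise_lt hA).le

lemma IsENPath.splice {p₁ p₂ q₁ q₂ : List (ℤ × ℤ)} {D' A' : ℤ × ℤ}
    (hp : IsENPath (p₁ ++ v :: p₂) D A) (hq : IsENPath (q₁ ++ v :: q₂) D' A') :
    IsENPath (p₁ ++ v :: q₂) D A' := by
  obtain ⟨hpD, -, hpc⟩ := isENPath_iff.1 hp
  obtain ⟨-, hqA, hqc⟩ := isENPath_iff.1 hq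
  exact ⟨by simpa using hpD, by simpa using hqA,
    isChain_split.2 ⟨(isChain_split.1 hpc).1, (isChain_split.1 hqc).2⟩⟩

end ENPath

namespace GesselViennot

open Set List

section TailSwap

variable {α : Type*} [DecidableEq α]

def tailSwap (pq : List α × List α) : List α × List α :=
  match pq.1.find? (· ∈ pq.2) with
  | none => pq
  | some v => (pq.1.takeWhile (· ≠ v) ++ pq.2.dropWhile (· ≠ v),
      pq.2.takeWhile (· ≠ v) ++ pq.1.dropWhile (· ≠ v))

lemma tailSwap_append_cons {p₁ p₂ q₁ q₂ : List α} {v : α}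
    (hp : ∀ u ∈ p₁, u ∉ q₁ ++ v :: q₂) (hq : v ∉ q₁) :
    tailSwap (p₁ ++ v :: p₂, q₁ ++ v :: q₂) = (p₁ ++ v :: q₂, q₁ ++ v :: p₂) := by
  have hfind : (p₁ ++ v :: p₂).find? (· ∈ q₁ ++ v :: q₂) = some v :=
    find?_eq_some_iff_append.2 ⟨by simp, p₁, p₂, rfl, by simpa using hp⟩
  have hv : v ∉ p₁ := fun h => hp v h (by simp)
  simp only [tailSwap, hfind, takeWhile_ne_append_cons hv, dropWhile_ne_append_cons hv,
    takeWhile_ne_append_cons hq, dropWhile_ne_append_cons hq]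

lemma tailSwap_tailSwap {p q : List α} (hp : p.Nodup) (h : ∃ v ∈ p, v ∈ q) :
    tailSwap (tailSwap (p, q)) = (p, q) := by
  obtain ⟨p₁, v, p₂, q₁, q₂, rfl, rfl, hp₁, hq₁⟩ := exists_split_at_first_common h
  rw [tailSwap_append_cons hp₁ hq₁, tailSwap_append_cons _ hq₁]
  grind

end TailSwap

def paths (D A : ℤ × ℤ) : Set (List (ℤ × ℤ)) := {p | IsENPath p D A}

@[simp]
lemma mem_paths {p : List (ℤ × ℤ)} {D A : ℤ × ℤ} : p ∈ paths D A ↔ IsENPath p D A := Iff.rfl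

lemma paths_self (D : ℤ × ℤ) : paths D D = {[D]} := by
  ext p
  rcases p with _ | ⟨u, _ | ⟨v, t⟩⟩
  · simp
  · simp [isENPath_singleton]
  · simp only [mem_paths, isENPath_cons_cons, mem_singleton_iff, cons.injEq, reduceCtorEq,
      and_false, iff_false]
    rintro ⟨rfl, hv, ht⟩
    have := ht.le
    rcases hv with rfl | rfl <;> simp [Prod.le_def] at this

lemma paths_eq_empty {D A : ℤ × ℤ} (h : ¬D ≤ A) : paths D A = ∅ :=
  eq_empty_of_forall_notMem fun _ hp => h hp.le

lemma paths_eq_union {D A : ℤ × ℤ} (h : D ≠ A) :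
    paths D A = cons D '' paths (D.1 + 1, D.2) A ∪ cons D '' paths (D.1, D.2 + 1) A := by
  ext p
  rcases p with _ | ⟨u, _ | ⟨v, t⟩⟩
  · simp
  · simpa [isENPath_singleton] using fun hD : u = D => hD ▸ h
  · simp only [mem_paths, mem_union, mem_image, isENPath_cons_cons, cons.injEq,
      exists_eq_right_right]
    constructor
    · rintro ⟨rfl, hv | hv, ht⟩ <;> subst hv
      exacts [.inl ⟨ht, rfl⟩, .inr ⟨ht, rfl⟩]
    · rintro (⟨ht, rfl⟩ | ⟨ht, rfl⟩) <;> obtain rfl := ht.head_eq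
      exacts [⟨rfl, .inl rfl, ht⟩, ⟨rfl, .inr rfl, ht⟩]

lemma encard_paths_of_ne {D A : ℤ × ℤ} (h : D ≠ A) :
    (paths D A).encard = (paths (D.1 + 1, D.2) A).encard + (paths (D.1, D.2 + 1) A).encard := by
  have hdisj : Disjoint (paths (D.1 + 1, D.2) A) (paths (D.1, D.2 + 1) A) := by
    refine disjoint_left.2 fun t h₁ h₂ => ?_
    have := (isENPath_iff.1 h₁).1.symm.trans (isENPath_iff.1 h₂).1
    simp at this
  rw [paths_eq_union h, encard_union_eq ((disjoint_image_iff cons_injective).2 hdisj),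
    cons_injective.encard_image, cons_injective.encard_image]

-- Counting with `encard`, which is additive without finiteness side conditions.
lemma encard_paths_eq_choose (a b : ℕ) {D A : ℤ × ℤ} (ha : A.1 - D.1 = a) (hb : A.2 - D.2 = b) :
    (paths D A).encard = (a + b).choose a := by
  induction a generalizing b D with
  | zero =>
    induction b generalizing D with
    | zero =>
      obtain rfl : D = A := Prod.ext (by omega) (by omega)
      simp [paths_self]
    | succ b ih =>
      rw [encard_paths_of_ne (by grind), paths_eq_empty (D := (D.1 + 1, D.2))
        (by rw [Prod.le_def]; omega), ih (by simpa using ha) (by simp; omega)]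
      simp
  | succ a iha =>
    induction b generalizing D with
    | zero =>
      rw [encard_paths_of_ne (by grind), paths_eq_empty (D := (D.1, D.2 + 1))
        (by rw [Prod.le_def]; omega), iha 0 (by simp; omega) (by simpa using hb)]
      simp
    | succ b ihb =>
      rw [encard_paths_of_ne (by grind), iha (b + 1) (by simp; omega) (by simpa using hb),
        ihb (by simpa using ha) (by simp; omega),
        show a + 1 + (b + 1) = a + (b + 1) + 1 by ring, Nat.choose_succ_succ',
        show a + (b + 1) = a + 1 + b by ring]
      norm_cast

lemma encard_paths {D A : ℤ × ℤ} (h : D ≤ A) : (paths D A).encard = gvCoef D A := by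
  rw [encard_paths_eq_choose (A.1 - D.1).toNat (A.2 - D.2).toNat (by simp [h.1]) (by simp [h.2]),
    gvCoef, Int.toNat_add (by simp [h.1]) (by simp [h.2])]

lemma paths_finite (D A : ℤ × ℤ) : (paths D A).Finite := by
  by_cases h : D ≤ A
  · exact finite_of_encard_eq_coe (encard_paths h)
  · simp [paths_eq_empty h]

lemma ncard_paths {D A : ℤ × ℤ} (h : D ≤ A) : (paths D A).ncard = gvCoef D A := by
  simpa [← (paths_finite D A).cast_ncard_eq] using encard_paths h

def intersectingPairs (D₀ A₀ D₁ A₁ : ℤ × ℤ) : Set (List (ℤ × ℤ) × List (ℤ × ℤ)) :=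
  {pq | IsENPath pq.1 D₀ A₀ ∧ IsENPath pq.2 D₁ A₁ ∧ ∃ v, v ∈ pq.1 ∧ v ∈ pq.2}

lemma nInt_eq_ncard_intersectingPairs (D A : Fin 2 → ℤ × ℤ) (σ : Equiv.Perm (Fin 2)) :
    nInt D A σ = (intersectingPairs (D 0) (A (σ 0)) (D 1) (A (σ 1))).ncard :=
  rfl

section Pairs

variable {D₀ A₀ D₁ A₁ : ℤ × ℤ}

lemma mapsTo_tailSwap_intersectingPairs :
    MapsTo tailSwap (intersectingPairs D₀ A₀ D₁ A₁) (intersectingPairs D₀ A₁ D₁ A₀) := by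
  rintro ⟨p, q⟩ ⟨hp, hq, hpq⟩
  obtain ⟨p₁, v, p₂, q₁, q₂, rfl, rfl, hp₁, hq₁⟩ := exists_split_at_first_common hpq
  rw [tailSwap_append_cons hp₁ hq₁]
  exact ⟨hp.splice hq, hq.splice hp, v, by simp, by simp⟩

lemma leftInvOn_tailSwap_intersectingPairs :
    LeftInvOn tailSwap tailSwap (intersectingPairs D₀ A₀ D₁ A₁) :=
  fun _ ⟨hp, _, hpq⟩ => tailSwap_tailSwap hp.nodup hpq

lemma ncard_intersectingPairs_swap :
    (intersectingPairs D₀ A₀ D₁ A₁).ncard = (intersectingPairs D₀ A₁ D₁ A₀).ncard :=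
  (InvOn.bijOn ⟨leftInvOn_tailSwap_intersectingPairs, leftInvOn_tailSwap_intersectingPairs⟩
    mapsTo_tailSwap_intersectingPairs mapsTo_tailSwap_intersectingPairs).ncard_eq

lemma intersectingPairs_subset_prod :
    intersectingPairs D₀ A₀ D₁ A₁ ⊆ paths D₀ A₀ ×ˢ paths D₁ A₁ :=
  fun _ h => ⟨h.1, h.2.1⟩

lemma intersectingPairs_eq_prod
    (h : ∀ p q, IsENPath p D₀ A₀ → IsENPath q D₁ A₁ → ∃ v, v ∈ p ∧ v ∈ q) :
    intersectingPairs D₀ A₀ D₁ A₁ = paths D₀ A₀ ×ˢ paths D₁ A₁ :=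
  intersectingPairs_subset_prod.antisymm fun _ ⟨hp, hq⟩ => ⟨hp, hq, h _ _ hp hq⟩

lemma ncard_prod_paths (h₀ : D₀ ≤ A₀) (h₁ : D₁ ≤ A₁) :
    (paths D₀ A₀ ×ˢ paths D₁ A₁).ncard = gvCoef D₀ A₀ * gvCoef D₁ A₁ := by
  rw [ncard_prod, ncard_paths h₀, ncard_paths h₁]

lemma ncard_nonintersecting_add_ncard_intersectingPairs (h₀ : D₀ ≤ A₀) (h₁ : D₁ ≤ A₁) :
    {pq : List (ℤ × ℤ) × List (ℤ × ℤ) | IsENPath pq.1 D₀ A₀ ∧ IsENPath pq.2 D₁ A₁ ∧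
        ∀ v, ¬(v ∈ pq.1 ∧ v ∈ pq.2)}.ncard + (intersectingPairs D₀ A₀ D₁ A₁).ncard =
      gvCoef D₀ A₀ * gvCoef D₁ A₁ := by
  have hdiff : {pq : List (ℤ × ℤ) × List (ℤ × ℤ) | IsENPath pq.1 D₀ A₀ ∧ IsENPath pq.2 D₁ A₁ ∧
      ∀ v, ¬(v ∈ pq.1 ∧ v ∈ pq.2)} = paths D₀ A₀ ×ˢ paths D₁ A₁ \ intersectingPairs D₀ A₀ D₁ A₁ := by
    ext pq
    simp only [intersectingPairs, mem_ofPred_eq, mem_sdiff, mem_prod, mem_paths, not_exists,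
      not_and]
    tauto
  rw [hdiff, ncard_sdiff_add_ncard_of_subset intersectingPairs_subset_prod
    ((paths_finite _ _).prod (paths_finite _ _)), ncard_prod_paths h₀ h₁]

end Pairs

end GesselViennot

open GesselViennot

/-- Involution step of Gessel–Viennot for `n = 2`: the number of vertex-disjoint pairs
equals `λ₁₁λ₂₂ - λ₁₂λ₂₁ + N_int(id) - N_int(swap)`; moreover, under the compatibility
hypothesis, `N_int(id) = N_int(swap)` and every pair of paths `D₁ → A₂`, `D₂ → A₁`
intersects. -/
theorem gessel_viennot_involution_step (D A : Fin 2 → ℤ × ℤ)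
    (hnn : ∀ i j, (D i).1 ≤ (A j).1 ∧ (D i).2 ≤ (A j).2)
    (compat : ∀ σ : Equiv.Perm (Fin 2), ∀ p q : List (ℤ × ℤ),
      IsENPath p (D 0) (A (σ 0)) → IsENPath q (D 1) (A (σ 1)) →
      (∀ v : ℤ × ℤ, ¬(v ∈ p ∧ v ∈ q)) → σ = 1) :
    ((Set.ncard {pq : List (ℤ × ℤ) × List (ℤ × ℤ) |
        IsENPath pq.1 (D 0) (A 0) ∧ IsENPath pq.2 (D 1) (A 1) ∧
        ∀ v : ℤ × ℤ, ¬(v ∈ pq.1 ∧ v ∈ pq.2)} : ℤ) =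
      (gvCoef (D 0) (A 0) : ℤ) * (gvCoef (D 1) (A 1) : ℤ) -
        (gvCoef (D 0) (A 1) : ℤ) * (gvCoef (D 1) (A 0) : ℤ) +
        (nInt D A 1 : ℤ) - (nInt D A (Equiv.swap 0 1) : ℤ)) ∧
    nInt D A 1 = nInt D A (Equiv.swap 0 1) ∧
    (∀ p q : List (ℤ × ℤ), IsENPath p (D 0) (A 1) → IsENPath q (D 1) (A 0) →
      ∃ v : ℤ × ℤ, v ∈ p ∧ v ∈ q) := by
  have hcross : ∀ p q : List (ℤ × ℤ), IsENPath p (D 0) (A 1) → IsENPath q (D 1) (A 0) →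
      ∃ v : ℤ × ℤ, v ∈ p ∧ v ∈ q := by
    intro p q hp hq
    by_contra hdisj
    have := compat (Equiv.swap 0 1) p q hp hq fun v hv => hdisj ⟨v, hv⟩
    exact absurd (congrArg (· 0) this) (by decide)
  have hswap : nInt D A 1 = nInt D A (Equiv.swap 0 1) := ncard_intersectingPairs_swap
  have hswapCount : nInt D A (Equiv.swap 0 1) = gvCoef (D 0) (A 1) * gvCoef (D 1) (A 0) := by
    rw [nInt_eq_ncard_intersectingPairs, Equiv.swap_apply_left, Equiv.swap_apply_right,
      intersectingPairs_eq_prod hcross, ncard_prod_paths (hnn 0 1) (hnn 1 0)]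
  have hsplit := ncard_nonintersecting_add_ncard_intersectingPairs (hnn 0 0) (hnn 1 1)
  change _ + nInt D A 1 = _ at hsplit
  refine ⟨?_, hswap, hcross⟩
  rw [hswap, hswapCount] at hsplit
  zify at hsplit
  linarith
end

section
/- For the diagonal octagon with all sides equal to n, the entropy bound holds asymptotically in the sense: (3/2)·ln 3 − 2·ln 2 = lim_{n→∞} (1/(3n²))·ln PP(n,n,n), where PP(n,n,n) = ∏_{i,j,k=1}^{n} (i+j+k−1)/(i+j+k−2). -/
/-!
MacMahon's product telescopes to `H(3n) H(n)³ / H(2n)³` with `H(m) = ∏_{a<m} a!`.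
Stirling's bounds `log a! = a log a - a + O(log a)` together with the comparison of
`∑_{a<m} a log a` with `∫ x log x` give `log H(m) = m²/2 · log m - 3m²/4 + O(m log m)`.
In the combination `log H(3n) - 3 log H(2n) + 3 log H(n)` the terms in `n² log n` and `n²`
cancel (`9 - 3·4 + 3 = 0`), leaving `n² (9/2 · log 3 - 6 log 2)`.
-/

open Finset Filter Real
open scoped Nat

section Telescoping

variable {M : Type*}

theorem sum_range_add_left_eq_sub [AddCommGroup M] (g : ℕ → M) (c n : ℕ) :
    ∑ i ∈ range n, g (c + i) = ∑ i ∈ range (c + n), g i - ∑ i ∈ range c, g i := by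
  rw [sum_range_add, add_sub_cancel_left]

theorem prod_Icc_one_eq_prod_range [CommMonoid M] (f : ℕ → M) (n : ℕ) :
    ∏ i ∈ Icc 1 n, f i = ∏ i ∈ range n, f (i + 1) := by
  rw [← Ico_add_one_right_eq_Icc, prod_Ico_eq_prod_range, add_tsub_cancel_right]
  simp_rw [add_comm 1]

theorem sum_range_cube_sub_eq [AddCommGroup M] (h : ℕ → M) (n : ℕ) :
    ∑ i ∈ range n, ∑ j ∈ range n, ∑ k ∈ range n, (h (i + j + k + 1) - h (i + j + k)) =
      ∑ a ∈ range (3 * n), ∑ b ∈ range a, h b - 3 • ∑ a ∈ range (2 * n), ∑ b ∈ range a, h b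
        + 3 • ∑ a ∈ range n, ∑ b ∈ range a, h b := by
  set P : ℕ → M := fun m => ∑ b ∈ range m, h b
  have hk (c : ℕ) : ∑ k ∈ range n, (h (c + k + 1) - h (c + k)) = h (c + n) - h c :=
    sum_range_sub (fun k => h (c + k)) n
  have hj (i : ℕ) : ∑ j ∈ range n, (h (i + j + n) - h (i + j)) =
      P (n + n + i) - 2 • P (n + i) + P i := by
    rw [sum_sub_distrib]
    have h1 := sum_range_add_left_eq_sub h (i + n) n
    have h2 := sum_range_add_left_eq_sub h i n
    simp only [add_right_comm i _ n] at h1 ⊢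
    rw [h1, h2, show i + n + n = n + n + i by ring, add_comm i n]
    abel
  calc _ = ∑ i ∈ range n, (P (n + n + i) - 2 • P (n + i) + P i) := by
        simp only [hk, hj]
    _ = _ := by
        rw [sum_add_distrib, sum_sub_distrib, ← smul_sum, sum_range_add_left_eq_sub P,
          sum_range_add_left_eq_sub P, show n + n + n = 3 * n by ring, ← two_mul]
        abel

end Telescoping

noncomputable def sumLogFactorial (m : ℕ) : ℝ := ∑ a ∈ range m, log (a ! : ℝ)

theorem log_factorial_eq_sum (a : ℕ) : log (a ! : ℝ) = ∑ b ∈ range a, log ((b : ℝ) + 1) := by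
  rw [← prod_range_add_one_eq_factorial, Nat.cast_prod, log_prod (fun b _ => by positivity)]
  push_cast
  rfl

theorem log_macMahonProduct_eq (n : ℕ) :
    log (∏ i ∈ Icc 1 n, ∏ j ∈ Icc 1 n, ∏ k ∈ Icc 1 n,
      ((i : ℝ) + (j : ℝ) + (k : ℝ) - 1) / ((i : ℝ) + (j : ℝ) + (k : ℝ) - 2)) =
    sumLogFactorial (3 * n) - 3 * sumLogFactorial (2 * n) + 3 * sumLogFactorial n := by
  set g : ℕ → ℝ := fun b => log ((b : ℝ) + 1) with hg
  have hreindex : ∏ i ∈ Icc 1 n, ∏ j ∈ Icc 1 n, ∏ k ∈ Icc 1 n,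
      ((i : ℝ) + (j : ℝ) + (k : ℝ) - 1) / ((i : ℝ) + (j : ℝ) + (k : ℝ) - 2) =
      ∏ i ∈ range n, ∏ j ∈ range n, ∏ k ∈ range n,
        (((i + j + k + 1 : ℕ) : ℝ) + 1) / (((i + j + k : ℕ) : ℝ) + 1) := by
    simp only [prod_Icc_one_eq_prod_range]
    push_cast
    ring_nf
  calc _ = ∑ i ∈ range n, ∑ j ∈ range n, ∑ k ∈ range n, (g (i + j + k + 1) - g (i + j + k)) := by
        rw [hreindex, log_prod fun _ _ => by positivity]
        refine sum_congr rfl fun i _ => ?_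
        rw [log_prod fun _ _ => by positivity]
        refine sum_congr rfl fun j _ => ?_
        rw [log_prod fun _ _ => by positivity]
        exact sum_congr rfl fun k _ => log_div (by positivity) (by positivity)
    _ = _ := by
        rw [sum_range_cube_sub_eq g n]
        simp only [sumLogFactorial, log_factorial_eq_sum, nsmul_eq_mul, Nat.cast_ofNat, hg]

theorem mul_log_sub_le_log_factorial (a : ℕ) : a * log a - a ≤ log (a ! : ℝ) := by
  rcases eq_or_ne a 0 with rfl | ha
  · simp
  have := Stirling.le_log_factorial_stirling ha
  have : 0 ≤ log (2 * π) := log_nonneg (by nlinarith [pi_gt_three])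
  have : 0 ≤ log (a : ℝ) := log_natCast_nonneg a
  linarith

theorem log_factorial_le (a : ℕ) : log (a ! : ℝ) ≤ a * log a - a + log a / 2 + 1 := by
  obtain _ | m := a
  · simp
  -- `stirlingSeq` decreases from its value `e / √2` at `1`.
  have hanti : log (Stirling.stirlingSeq (m + 1)) ≤ log (Stirling.stirlingSeq 1) :=
    Stirling.log_stirlingSeq'_antitone (Nat.zero_le m)
  have hm : (0 : ℝ) < (m + 1 : ℕ) := by positivity
  rw [Stirling.log_stirlingSeq_formula, Stirling.stirlingSeq_one,
    log_div (exp_pos 1).ne' (by positivity), log_exp, log_sqrt zero_le_two,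
    log_mul two_ne_zero hm.ne', log_div hm.ne' (exp_pos 1).ne', log_exp] at hanti
  linarith

theorem integral_mul_log {a b : ℝ} (ha : 0 < a) (hb : 0 < b) :
    ∫ x in a..b, x * log x = b ^ 2 / 2 * log b - b ^ 2 / 4 - (a ^ 2 / 2 * log a - a ^ 2 / 4) := by
  refine intervalIntegral.integral_eq_sub_of_hasDerivAt
    (f := fun x => x ^ 2 / 2 * log x - x ^ 2 / 4) (fun x hx => ?_)
    (continuous_mul_log.intervalIntegrable a b)
  have hx : x ≠ 0 := ((lt_min ha hb).trans_le hx.1).ne'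
  refine ((((hasDerivAt_pow 2 x).div_const 2).mul (hasDerivAt_log hx)).sub
    ((hasDerivAt_pow 2 x).div_const 4)).congr_deriv ?_
  field_simp
  ring

theorem monotoneOn_mul_log : MonotoneOn (fun x : ℝ => x * log x) (Set.Ici 1) :=
  mul_log_strictMonoOn.monotoneOn.mono fun _ hx =>
    (exp_le_one_iff.2 (by norm_num)).trans hx

theorem sum_range_mul_log_le (m : ℕ) :
    ∑ a ∈ range m, (a : ℝ) * log a ≤ (m : ℝ) ^ 2 / 2 * log m - (m : ℝ) ^ 2 / 4 + 1 / 4 := by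
  rcases eq_or_ne m 0 with rfl | hm
  · norm_num
  have hm : 1 ≤ m := Nat.one_le_iff_ne_zero.2 hm
  have hle := (monotoneOn_mul_log.mono fun x hx => by simpa using hx.1).sum_le_integral_Ico hm
  rw [range_eq_Ico, sum_eq_sum_Ico_succ_bot (by omega)]
  rw [Nat.cast_one, integral_mul_log one_pos (by positivity)] at hle
  simp only [Nat.cast_zero, zero_mul, zero_add, log_one] at hle ⊢
  linarith

theorem le_sum_range_mul_log (m : ℕ) :
    (m : ℝ) ^ 2 / 2 * log m - (m : ℝ) ^ 2 / 4 - m * log m ≤ ∑ a ∈ range m, (a : ℝ) * log a := by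
  rcases eq_or_ne m 0 with rfl | hm
  · norm_num
  have hm : 1 ≤ m := Nat.one_le_iff_ne_zero.2 hm
  have hle := (monotoneOn_mul_log.mono fun x hx => by simpa using hx.1).integral_le_sum_Ico hm
  have hsub : ∑ i ∈ Ico 1 m, ((i + 1 : ℕ) : ℝ) * log ((i + 1 : ℕ) : ℝ) ≤
      ∑ a ∈ range (m + 1), (a : ℝ) * log a := by
    rw [sum_Ico_add' (fun a : ℕ => (a : ℝ) * log a)]
    refine sum_le_sum_of_subset_of_nonneg (fun a ha => ?_) fun a _ _ => ?_
    · simp only [mem_Ico, mem_range] at ha ⊢; omega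
    · exact mul_nonneg a.cast_nonneg (log_natCast_nonneg a)
  rw [Nat.cast_one, integral_mul_log one_pos (by positivity)] at hle
  rw [sum_range_succ] at hsub
  simp only [log_one] at hle
  linarith

theorem sum_range_natCast (m : ℕ) : ∑ a ∈ range m, (a : ℝ) = m * (m - 1) / 2 := by
  induction m with
  | zero => simp
  | succ m ih => rw [sum_range_succ, ih]; push_cast; ring

noncomputable def sumLogFactorialLeading (x : ℝ) : ℝ := x ^ 2 / 2 * log x - 3 * x ^ 2 / 4

theorem sumLogFactorialLeading_mul {k x : ℝ} (hk : k ≠ 0) (hx : x ≠ 0) :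
    sumLogFactorialLeading (k * x) =
      k ^ 2 * sumLogFactorialLeading x + k ^ 2 * x ^ 2 / 2 * log k := by
  simp only [sumLogFactorialLeading, log_mul hk hx]
  ring

theorem abs_sumLogFactorial_sub_leading_le (m : ℕ) :
    |sumLogFactorial m - sumLogFactorialLeading m| ≤ 2 * m * (1 + log m) := by
  rcases eq_or_ne m 0 with rfl | hm
  · simp [sumLogFactorial, sumLogFactorialLeading]
  have hm : (1 : ℝ) ≤ m := by exact_mod_cast Nat.one_le_iff_ne_zero.2 hm
  have hlog_le : ∀ a ∈ range m, log (a : ℝ) ≤ log m := fun a ha => by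
    rcases eq_or_ne a 0 with rfl | ha0
    · simpa using log_natCast_nonneg m
    · exact log_le_log (by positivity) (by exact_mod_cast (mem_range.1 ha).le)
  have hlower : ∑ a ∈ range m, ((a : ℝ) * log a - a) ≤ sumLogFactorial m :=
    sum_le_sum fun a _ => mul_log_sub_le_log_factorial a
  have hupper : sumLogFactorial m ≤ ∑ a ∈ range m, ((a : ℝ) * log a - a + (log m / 2 + 1)) :=
    sum_le_sum fun a ha => (log_factorial_le a).trans (by linarith [hlog_le a ha])
  rw [sum_sub_distrib, sum_range_natCast] at hlower
  rw [sum_add_distrib, sum_sub_distrib, sum_range_natCast, sum_const, card_range,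
    nsmul_eq_mul] at hupper
  have := sum_range_mul_log_le m
  have := le_sum_range_mul_log m
  have : 0 ≤ (m : ℝ) * log m := mul_nonneg (by positivity) (log_natCast_nonneg m)
  rw [abs_le, sumLogFactorialLeading]
  constructor <;> linarith

theorem tendsto_sumLogFactorial_sub_leading_div_sq :
    Tendsto (fun m : ℕ => (sumLogFactorial m - sumLogFactorialLeading m) / (m : ℝ) ^ 2)
      atTop (nhds 0) := by
  have hlog : Tendsto (fun m : ℕ => log (m : ℝ) / m) atTop (nhds 0) := by
    simpa [Function.comp_def] using (tendsto_pow_log_div_mul_add_atTop 1 0 1 one_ne_zero).comp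
      tendsto_natCast_atTop_atTop
  have hbound := (tendsto_one_div_atTop_nhds_zero_nat.add hlog).const_mul 2
  rw [add_zero, mul_zero] at hbound
  refine squeeze_zero_norm' ?_ hbound
  filter_upwards [eventually_ne_atTop 0] with m hm
  have hm : (0 : ℝ) < m := by positivity
  rw [norm_div, norm_pow, Real.norm_eq_abs, Real.norm_eq_abs, abs_of_pos hm,
    div_le_iff₀ (by positivity)]
  calc _ ≤ 2 * m * (1 + log m) := abs_sumLogFactorial_sub_leading_le m
    _ = _ := by field_simp

theorem tendsto_sumLogFactorial_mul_sub_leading_div_sq {k : ℕ} (hk : k ≠ 0) :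
    Tendsto (fun n : ℕ => (sumLogFactorial (k * n) - sumLogFactorialLeading (k * n : ℕ)) /
      (n : ℝ) ^ 2) atTop (nhds 0) := by
  have := (tendsto_sumLogFactorial_sub_leading_div_sq.comp
    (tendsto_id.const_mul_atTop' (Nat.pos_of_ne_zero hk))).const_mul ((k : ℝ) ^ 2)
  rw [mul_zero] at this
  refine this.congr' ?_
  filter_upwards [eventually_ne_atTop 0] with n hn
  simp only [Function.comp_apply, id, Nat.cast_mul]
  field_simp

/-- The entropy per tile of rhombus tilings of the regular-side hexagon:
`(3/2)·ln 3 - 2·ln 2 = lim_{n→∞} (1/(3n²))·ln PP(n,n,n)` where `PP(n,n,n)` is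
MacMahon's box product. -/
theorem hexagon_entropy :
    Filter.Tendsto (fun n : ℕ =>
        (1 / (3 * (n : ℝ) ^ 2)) * Real.log
          (∏ i ∈ Finset.Icc 1 n, ∏ j ∈ Finset.Icc 1 n, ∏ k ∈ Finset.Icc 1 n,
            ((i : ℝ) + (j : ℝ) + (k : ℝ) - 1) / ((i : ℝ) + (j : ℝ) + (k : ℝ) - 2)))
      Filter.atTop (nhds ((3 / 2) * Real.log 3 - 2 * Real.log 2)) := by
  have hremainder := (tendsto_const_nhds (x := (3 / 2) * log 3 - 2 * log 2)).add
    ((((tendsto_sumLogFactorial_mul_sub_leading_div_sq three_ne_zero).sub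
      ((tendsto_sumLogFactorial_mul_sub_leading_div_sq two_ne_zero).const_mul 3)).add
      (tendsto_sumLogFactorial_sub_leading_div_sq.const_mul 3)).div_const 3)
  rw [mul_zero, sub_zero, add_zero, zero_div, add_zero] at hremainder
  refine hremainder.congr' ?_
  filter_upwards [eventually_ne_atTop 0] with n hn
  have hn : (n : ℝ) ≠ 0 := Nat.cast_ne_zero.2 hn
  rw [log_macMahonProduct_eq]
  simp only [Nat.cast_mul, Nat.cast_ofNat, sumLogFactorialLeading_mul three_ne_zero hn,
    sumLogFactorialLeading_mul two_ne_zero hn]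
  field_simp
  ring
end
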